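/- Check–plaquette annihilation: suppose the commutation-function conditions c(p_g,p_b) + c(q_g,q_b) ≡ 0 and c(p_r,p_g) + c(q_r,q_g) ≡ 0 hold modulo D, and suppose the check-product condition (p_g * p_r * p_b) ⊗ₖ (q_g * q_r * q_b) = 1 holds. Then the product of the blue plaquette edge operator with the green check equals the identity: ((p_r * p_b) ⊗ₖ (q_r * q_b)) * (p_g ⊗ₖ q_g) = 1. -/

import Mathlib

noncomputable def omg (D : ℕ) : ℂ := Complex.exp (2 * Real.pi * Complex.I / D)

noncomputable def Xmat (D : ℕ) : Matrix (Fin D) (Fin D) ℂ :=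
  Matrix.of fun i j => if (i : ZMod D) = (j : ZMod D) + 1 then 1 else 0

noncomputable def Zmat (D : ℕ) : Matrix (Fin D) (Fin D) ℂ :=
  Matrix.of fun i j => if i = j then (omg D) ^ (i : ℕ) else 0

open Kronecker

/-!
The Weyl relation `Z X = ω X Z` makes any two generalized Pauli operators commute up to a phase:
`P Q = ω ^ c(P, Q) • Q P`. Moving `p_g` past `p_r p_b` and `q_g` past `q_r q_b` turns the check
product into `ω ^ (c(p_g, p_r) + c(p_g, p_b) + c(q_g, q_r) + c(q_g, q_b)) • ((p_r p_b p_g) ⊗ (q_r q_b q_g))`.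
By antisymmetry of `c` this exponent is the difference of the two given congruences, so it vanishes
modulo `D`, and the phase is `1` because `ω` is a primitive `D`-th root of unity.
-/

open Matrix

theorem zpow_mul_zpow_of_mul_eq_central_mul {G : Type*} [Group G] {w x z : G}
    (hw : ∀ g, Commute w g) (h : z * x = w * x * z) (a b : ℤ) :
    z ^ b * x ^ a = w ^ (a * b) * x ^ a * z ^ b := by
  have hza : SemiconjBy z (x ^ a) (w ^ a * x ^ a) := (hw x).mul_zpow a ▸ SemiconjBy.zpow_right h a
  have haz : SemiconjBy (x ^ a) z ((w ^ a)⁻¹ * z) := by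
    unfold SemiconjBy
    rw [mul_assoc, hza.eq]
    group
  have habz : x ^ a * z ^ b = w ^ (-(a * b)) * z ^ b * x ^ a := by
    rw [(haz.zpow_right b).eq, ((hw z).zpow_left a).inv_left.mul_zpow, ← _root_.zpow_neg,
      ← _root_.zpow_mul, neg_mul]
  calc z ^ b * x ^ a = w ^ (a * b) * (w ^ (-(a * b)) * z ^ b * x ^ a) := by group
    _ = w ^ (a * b) * x ^ a * z ^ b := by rw [← habz, mul_assoc]

theorem Matrix.zpow_mul_zpow_of_mul_eq_smul {n K : Type*} [Fintype n] [DecidableEq n] [Field K]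
    {A B : Matrix n n K} (hA : IsUnit A) (hB : IsUnit B) {c : K} (hc : c ≠ 0)
    (h : B * A = c • (A * B)) (a b : ℤ) : B ^ b * A ^ a = c ^ (a * b) • (A ^ a * B ^ b) := by
  let w : (Matrix n n K)ˣ :=
    Units.map (algebraMap K (Matrix n n K) : K →* Matrix n n K) (Units.mk0 c hc)
  have hw (k : ℤ) : ((w ^ k : (Matrix n n K)ˣ) : Matrix n n K) = algebraMap K _ (c ^ k) := by
    simp [w, ← map_zpow]
  have key := congrArg Units.val <| zpow_mul_zpow_of_mul_eq_central_mul (w := w) (x := hA.unit)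
    (z := hB.unit) (fun g => Units.ext (Algebra.commutes _ _)) (Units.ext ?_) a b
  · simpa [coe_units_zpow, hw, Algebra.smul_def, mul_assoc] using key
  · simpa [w, Algebra.smul_def, mul_assoc] using h

theorem omg_ne_zero (D : ℕ) : omg D ≠ 0 := Complex.exp_ne_zero _

theorem Zmat_eq_diagonal (D : ℕ) : Zmat D = diagonal fun i : Fin D => omg D ^ (i : ℕ) := by
  ext i j
  simp [Zmat, diagonal_apply]

theorem isUnit_Zmat (D : ℕ) : IsUnit (Zmat D) := by
  rw [Zmat_eq_diagonal, isUnit_diagonal, Pi.isUnit_iff]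
  exact fun i => (pow_ne_zero _ (omg_ne_zero D)).isUnit

noncomputable def pauli (D : ℕ) (a b : ℤ) : Matrix (Fin D) (Fin D) ℂ := Xmat D ^ a * Zmat D ^ b

section

variable (D : ℕ) [NeZero D]

theorem isPrimitiveRoot_omg : IsPrimitiveRoot (omg D) D :=
  Complex.isPrimitiveRoot_exp D (NeZero.ne D)

variable {D} in
theorem omg_pow_eq_pow_of_natCast_eq {m n : ℕ} (h : (m : ZMod D) = n) :
    omg D ^ m = omg D ^ n := by
  have hω := isPrimitiveRoot_omg D
  rwa [(hω.isOfFinOrder (NeZero.ne D)).pow_inj_mod, ← hω.eq_orderOf,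
    ← ZMod.natCast_eq_natCast_iff']

variable {D} in
theorem omg_zpow_eq_one {k : ℤ} (h : (k : ZMod D) = 0) : omg D ^ k = 1 := by
  rwa [(isPrimitiveRoot_omg D).zpow_eq_one_iff_dvd, ← ZMod.intCast_zmod_eq_zero_iff_dvd]

theorem Xmat_eq_permMatrix : Xmat D = Equiv.Perm.permMatrix ℂ (Equiv.subRight (1 : Fin D)) := by
  ext i j
  have hshift : ((i : ℕ) : ZMod D) = ((j : ℕ) : ZMod D) + 1 ↔ i - 1 = j := by
    rw [← Nat.cast_succ, ZMod.natCast_eq_natCast_iff', Nat.mod_eq_of_lt i.isLt, sub_eq_iff_eq_add,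
      Fin.ext_iff, Fin.val_add]
    simp
  simp [Xmat, hshift]

theorem isUnit_Xmat : IsUnit (Xmat D) := by
  rw [Xmat_eq_permMatrix, isUnit_iff_isUnit_det, det_permutation]
  exact (Equiv.Perm.sign _).isUnit.map (Int.castRingHom ℂ)

theorem Zmat_mul_Xmat : Zmat D * Xmat D = omg D • (Xmat D * Zmat D) := by
  rw [Zmat_eq_diagonal]
  ext i j
  rw [diagonal_mul, Matrix.smul_apply, mul_diagonal]
  simp only [Xmat, of_apply]
  split_ifs with h
  · rw [omg_pow_eq_pow_of_natCast_eq (n := (j : ℕ) + 1) (by push_cast; exact h), pow_succ]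
    simp [mul_comm]
  · simp

theorem Zmat_zpow_mul_Xmat_zpow (a b : ℤ) :
    Zmat D ^ b * Xmat D ^ a = omg D ^ (a * b) • (Xmat D ^ a * Zmat D ^ b) :=
  zpow_mul_zpow_of_mul_eq_smul (isUnit_Xmat D) (isUnit_Zmat D) (omg_ne_zero D) (Zmat_mul_Xmat D) a b

theorem pauli_mul_pauli (a b a' b' : ℤ) :
    pauli D a b * pauli D a' b' = omg D ^ (a' * b) • pauli D (a + a') (b + b') := by
  have hX := (isUnit_iff_isUnit_det _).mp (isUnit_Xmat D)
  have hZ := (isUnit_iff_isUnit_det _).mp (isUnit_Zmat D)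
  calc pauli D a b * pauli D a' b' = Xmat D ^ a * (Zmat D ^ b * Xmat D ^ a') * Zmat D ^ b' := by
        simp only [pauli, mul_assoc]
    _ = omg D ^ (a' * b) • (Xmat D ^ a * Xmat D ^ a' * (Zmat D ^ b * Zmat D ^ b')) := by
        rw [Zmat_zpow_mul_Xmat_zpow, mul_smul_comm, smul_mul_assoc]
        simp only [mul_assoc]
    _ = omg D ^ (a' * b) • pauli D (a + a') (b + b') := by
        rw [pauli, zpow_add hX, zpow_add hZ]

/-- The phase exponent is the commutation function `c(X^a Z^b, X^a' Z^b')`. -/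
theorem pauli_mul_pauli_comm (a b a' b' : ℤ) :
    pauli D a b * pauli D a' b' = omg D ^ (-(a * b') + a' * b) • (pauli D a' b' * pauli D a b) := by
  rw [pauli_mul_pauli, pauli_mul_pauli, smul_smul, ← zpow_add₀ (omg_ne_zero D), add_comm a',
    add_comm b']
  congr 2
  ring

theorem pauli_mul_pauli_mul_pauli_comm (a₁ b₁ a₂ b₂ a₃ b₃ : ℤ) :
    pauli D a₁ b₁ * pauli D a₂ b₂ * pauli D a₃ b₃ =
      omg D ^ ((-(a₁ * b₂) + a₂ * b₁) + (-(a₁ * b₃) + a₃ * b₁)) •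
        (pauli D a₂ b₂ * pauli D a₃ b₃ * pauli D a₁ b₁) := by
  rw [pauli_mul_pauli_comm D a₁ b₁ a₂, smul_mul_assoc, mul_assoc (pauli D a₂ b₂),
    pauli_mul_pauli_comm D a₁ b₁ a₃, mul_smul_comm, smul_smul, ← zpow_add₀ (omg_ne_zero D),
    ← mul_assoc]

end

/-- Check–plaquette annihilation: the blue plaquette edge operator times the
green check equals the identity. -/
theorem check_plaquette_annihilation (D : ℕ) (hD : 2 ≤ D)
    (ag bg ar br ab bb αg βg αr βr αb βb : ℤ)
    (pg : Matrix (Fin D) (Fin D) ℂ) (hpg : pg = Xmat D ^ ag * Zmat D ^ bg)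
    (pr : Matrix (Fin D) (Fin D) ℂ) (hpr : pr = Xmat D ^ ar * Zmat D ^ br)
    (pb : Matrix (Fin D) (Fin D) ℂ) (hpb : pb = Xmat D ^ ab * Zmat D ^ bb)
    (qg : Matrix (Fin D) (Fin D) ℂ) (hqg : qg = Xmat D ^ αg * Zmat D ^ βg)
    (qr : Matrix (Fin D) (Fin D) ℂ) (hqr : qr = Xmat D ^ αr * Zmat D ^ βr)
    (qb : Matrix (Fin D) (Fin D) ℂ) (hqb : qb = Xmat D ^ αb * Zmat D ^ βb)
    (h1 : (((-(ag * bb) + ab * bg) + (-(αg * βb) + αb * βg) : ℤ) : ZMod D) = 0)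
    (h2 : (((-(ar * bg) + ag * br) + (-(αr * βg) + αg * βr) : ℤ) : ZMod D) = 0)
    (hprod : (pg * pr * pb) ⊗ₖ (qg * qr * qb) = 1) :
    ((pr * pb) ⊗ₖ (qr * qb)) * (pg ⊗ₖ qg) = 1 := by
  have : NeZero D := ⟨by omega⟩
  obtain ⟨rfl, rfl, rfl⟩ : pg = pauli D ag bg ∧ pr = pauli D ar br ∧ pb = pauli D ab bb :=
    ⟨hpg, hpr, hpb⟩
  obtain ⟨rfl, rfl, rfl⟩ : qg = pauli D αg βg ∧ qr = pauli D αr βr ∧ qb = pauli D αb βb :=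
    ⟨hqg, hqr, hqb⟩
  rw [pauli_mul_pauli_mul_pauli_comm D ag, pauli_mul_pauli_mul_pauli_comm D αg, smul_kronecker,
    kronecker_smul, smul_smul, ← zpow_add₀ (omg_ne_zero D), omg_zpow_eq_one, one_smul] at hprod
  · rwa [← mul_kronecker_mul]
  · push_cast at h1 h2 ⊢
    linear_combination h1 - h2
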